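/- Let σ > 2 be a real number. There exists a constant C > 0 such that for all complex numbers φ₁, ψ₁, φ₂, ψ₂, | |φ₁|^{2(σ-2)} Im(ψ₁² conj(φ₁)²) − |φ₂|^{2(σ-2)} Im(ψ₂² conj(φ₂)²) | ≤ C (|φ₁ − φ₂| + |ψ₁ − ψ₂|) · (|φ₁| + |ψ₁| + |φ₂| + |ψ₂|)^{2σ - 1}. -/

import Mathlib

/-!
Put `a = 2(σ - 2) > 0`, `rᵢ = ‖φᵢ‖`, `uᵢ = Im (ψᵢ² conj φᵢ²)`, `M = Σ ‖φᵢ‖ + ‖ψᵢ‖` and split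
`r₁^a u₁ - r₂^a u₂ = r₁^a (u₁ - u₂) + (r₁^a - r₂^a) u₂`.
Since `ψ² conj φ² = (ψ conj φ)²`, the first term is at most `M^a · δ M³`, `δ` being the distance
of the arguments. In the second, `|u₂| ≤ r₂² M²` supplies a factor `max r₁ r₂`, which absorbs the
failure of `t ↦ t^a` to be Lipschitz at `0` (for `a < 1`):
`max x y · |x^a - y^a| ≤ max 1 a · |x - y| · (max x y)^a` is Bernoulli's inequality after scaling.
-/

open Real ComplexConjugate

lemma one_sub_rpow_le_max_mul_one_sub {a t : ℝ} (ht₀ : 0 ≤ t) (ht₁ : t ≤ 1) :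
    1 - t ^ a ≤ max 1 a * (1 - t) := by
  rcases le_total a 1 with ha | ha
  · have : t ≤ t ^ a := self_le_rpow_of_le_one ht₀ ht₁ ha
    nlinarith [le_max_left 1 a]
  · have hB := one_add_mul_self_le_rpow_one_add (s := t - 1) (by linarith) ha
    rw [add_sub_cancel] at hB
    nlinarith [le_max_right 1 a]

lemma rpow_sub_rpow_mul_le {a x y : ℝ} (ha : 0 < a) (hy : 0 ≤ y) (hyx : y ≤ x) :
    (x ^ a - y ^ a) * x ≤ max 1 a * (x - y) * x ^ a := by
  rcases (hy.trans hyx).eq_or_lt with rfl | hx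
  · simp [le_antisymm hyx hy, zero_rpow ha.ne']
  have hB := one_sub_rpow_le_max_mul_one_sub (a := a) (div_nonneg hy hx.le)
    ((div_le_one hx).mpr hyx)
  rw [div_rpow hy hx.le] at hB
  have hxa : 0 < x ^ a := rpow_pos_of_pos hx a
  calc (x ^ a - y ^ a) * x = (1 - y ^ a / x ^ a) * (x * x ^ a) := by field_simp
    _ ≤ max 1 a * (1 - y / x) * (x * x ^ a) := by gcongr
    _ = max 1 a * (x - y) * x ^ a := by field_simp

lemma abs_rpow_sub_rpow_mul_max_le {a x y : ℝ} (ha : 0 < a) (hx : 0 ≤ x) (hy : 0 ≤ y) :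
    |x ^ a - y ^ a| * max x y ≤ max 1 a * |x - y| * max x y ^ a := by
  wlog hyx : y ≤ x generalizing x y
  · rw [abs_sub_comm, abs_sub_comm x, max_comm]
    exact this hy hx (le_of_not_ge hyx)
  rw [max_eq_left hyx, abs_of_nonneg (sub_nonneg.mpr hyx),
    abs_of_nonneg (sub_nonneg.mpr (rpow_le_rpow hy hyx ha.le))]
  exact rpow_sub_rpow_mul_le ha hy hyx

lemma norm_sq_mul_conj_sq_sub_le (φ₁ ψ₁ φ₂ ψ₂ : ℂ) :
    ‖ψ₁ ^ 2 * conj φ₁ ^ 2 - ψ₂ ^ 2 * conj φ₂ ^ 2‖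
      ≤ (‖φ₁ - φ₂‖ + ‖ψ₁ - ψ₂‖) * (‖φ₁‖ + ‖ψ₁‖ + ‖φ₂‖ + ‖ψ₂‖) ^ 3 := by
  set M := ‖φ₁‖ + ‖ψ₁‖ + ‖φ₂‖ + ‖ψ₂‖
  have hφ₁ := norm_nonneg φ₁
  have hψ₁ := norm_nonneg ψ₁
  have hφ₂ := norm_nonneg φ₂
  have hψ₂ := norm_nonneg ψ₂
  have hsub : ‖ψ₁ * conj φ₁ - ψ₂ * conj φ₂‖ ≤ (‖φ₁ - φ₂‖ + ‖ψ₁ - ψ₂‖) * M := by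
    have : ψ₁ * conj φ₁ - ψ₂ * conj φ₂ = (ψ₁ - ψ₂) * conj φ₁ + ψ₂ * conj (φ₁ - φ₂) := by
      simp only [map_sub]; ring
    rw [this]
    refine (norm_add_le _ _).trans ?_
    simp only [norm_mul, Complex.norm_conj]
    nlinarith [norm_nonneg (φ₁ - φ₂), norm_nonneg (ψ₁ - ψ₂)]
  have hadd : ‖ψ₁ * conj φ₁ + ψ₂ * conj φ₂‖ ≤ M ^ 2 := by
    refine (norm_add_le _ _).trans ?_
    simp only [norm_mul, Complex.norm_conj]
    nlinarith
  calc ‖ψ₁ ^ 2 * conj φ₁ ^ 2 - ψ₂ ^ 2 * conj φ₂ ^ 2‖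
      = ‖ψ₁ * conj φ₁ - ψ₂ * conj φ₂‖ * ‖ψ₁ * conj φ₁ + ψ₂ * conj φ₂‖ := by
        rw [← norm_mul]; ring_nf
    _ ≤ (‖φ₁ - φ₂‖ + ‖ψ₁ - ψ₂‖) * M * M ^ 2 := by gcongr
    _ = (‖φ₁ - φ₂‖ + ‖ψ₁ - ψ₂‖) * M ^ 3 := by ring

lemma abs_rpow_mul_sub_rpow_mul_le {a r₁ r₂ u₁ u₂ δ M : ℝ} (ha : 0 < a) (hr₁ : 0 ≤ r₁)
    (hr₂ : 0 ≤ r₂) (hr₁M : r₁ ≤ M) (hr₂M : r₂ ≤ M) (hr : |r₁ - r₂| ≤ δ)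
    (hu : |u₁ - u₂| ≤ δ * M ^ 3) (hu₂ : |u₂| ≤ r₂ ^ 2 * M ^ 2) :
    |r₁ ^ a * u₁ - r₂ ^ a * u₂| ≤ (1 + max 1 a) * δ * M ^ (a + 3) := by
  have hM : 0 ≤ M := hr₁.trans hr₁M
  have hδ : 0 ≤ δ := (abs_nonneg _).trans hr
  have hmax : max r₁ r₂ ≤ M := max_le hr₁M hr₂M
  have hmax₀ : 0 ≤ max r₁ r₂ := le_max_of_le_left hr₁
  have hfirst : r₁ ^ a * |u₁ - u₂| ≤ M ^ a * (δ * M ^ 3) := by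
    gcongr
  have hsecond : |r₁ ^ a - r₂ ^ a| * |u₂| ≤ max 1 a * δ * M ^ a * M ^ 3 :=
    calc |r₁ ^ a - r₂ ^ a| * |u₂|
        ≤ |r₁ ^ a - r₂ ^ a| * (max r₁ r₂ * M * M ^ 2) := by
          refine mul_le_mul_of_nonneg_left (hu₂.trans ?_) (abs_nonneg _)
          have : r₂ ≤ max r₁ r₂ := le_max_right _ _
          gcongr
          nlinarith
      _ = |r₁ ^ a - r₂ ^ a| * max r₁ r₂ * M ^ 3 := by ring
      _ ≤ max 1 a * |r₁ - r₂| * max r₁ r₂ ^ a * M ^ 3 := by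
          gcongr ?_ * _
          exact abs_rpow_sub_rpow_mul_max_le ha hr₁ hr₂
      _ ≤ max 1 a * δ * M ^ a * M ^ 3 := by gcongr
  calc |r₁ ^ a * u₁ - r₂ ^ a * u₂|
      = |r₁ ^ a * (u₁ - u₂) + (r₁ ^ a - r₂ ^ a) * u₂| := by ring_nf
    _ ≤ r₁ ^ a * |u₁ - u₂| + |r₁ ^ a - r₂ ^ a| * |u₂| := by
        refine (abs_add_le _ _).trans_eq ?_
        rw [abs_mul, abs_mul, abs_of_nonneg (rpow_nonneg hr₁ a)]
    _ ≤ M ^ a * (δ * M ^ 3) + max 1 a * δ * M ^ a * M ^ 3 := add_le_add hfirst hsecond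
    _ = (1 + max 1 a) * δ * M ^ (a + 3) := by
        rw [show (3 : ℝ) = ((3 : ℕ) : ℝ) by norm_num, rpow_add_natCast' hM (by positivity)]
        ring

theorem stmt3 (σ : ℝ) (hσ : 2 < σ) :
    ∃ C > 0, ∀ φ₁ ψ₁ φ₂ ψ₂ : ℂ,
      |‖φ₁‖ ^ (2 * (σ - 2)) * (ψ₁ ^ 2 * ((starRingEnd ℂ) φ₁) ^ 2).im
          - ‖φ₂‖ ^ (2 * (σ - 2)) * (ψ₂ ^ 2 * ((starRingEnd ℂ) φ₂) ^ 2).im|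
        ≤ C * (‖φ₁ - φ₂‖ + ‖ψ₁ - ψ₂‖)
          * (‖φ₁‖ + ‖ψ₁‖ + ‖φ₂‖ + ‖ψ₂‖) ^ (2 * σ - 1) := by
  set a := 2 * (σ - 2)
  refine ⟨1 + max 1 a, by positivity, fun φ₁ ψ₁ φ₂ ψ₂ => ?_⟩
  have hφ₁ := norm_nonneg φ₁
  have hψ₁ := norm_nonneg ψ₁
  have hφ₂ := norm_nonneg φ₂
  have hψ₂ := norm_nonneg ψ₂
  rw [show 2 * σ - 1 = a + 3 by ring]
  refine abs_rpow_mul_sub_rpow_mul_le (by linarith) hφ₁ hφ₂ (by linarith) (by linarith)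
    ((abs_norm_sub_norm_le φ₁ φ₂).trans (le_add_of_nonneg_right (norm_nonneg _))) ?_ ?_
  · rw [← Complex.sub_im]
    exact (Complex.abs_im_le_norm _).trans (norm_sq_mul_conj_sq_sub_le φ₁ ψ₁ φ₂ ψ₂)
  · refine (Complex.abs_im_le_norm _).trans ?_
    rw [norm_mul, norm_pow, norm_pow, Complex.norm_conj, mul_comm]
    gcongr
    linarith
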